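/- Let H be a finite-dimensional complex inner product space with orthonormal basis (e_j)_{j=1}^n, let ρ_1 > ρ_2 > ... > ρ_n > 0 be distinct positive reals, D the linear map with D e_j = ρ_j e_j, and A : H → H a nonnegative self-adjoint map. If U_0 is a unitary map minimizing U ↦ trace(D ∘ U† ∘ A ∘ U) over all unitaries U on H, then for each j the vector u_j := U_0 e_j is an eigenvector of A: there exists λ_j ≥ 0 with A u_j = λ_j u_j. -/

import Mathlib

/-!
Write `u l = U₀ (e l)`. Since `trace (D ∘ U† ∘ A ∘ U) = ∑ l, ρ l * ⟪U e l, A (U e l)⟫`, the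
orthonormal basis `u` minimises the weighted energy `∑ l, ρ l * re ⟪v l, A (v l)⟫` among all
orthonormal families `v`. Rotating `u` in the plane of `u j, u k` by
`u j ↦ c • u j + s z • u k`, `u k ↦ -s z̄ • u j + c • u k` (`c² + s² = 1`, `|z| = 1`) changes the
energy by `(ρ j - ρ k) * (s² (q - p) + 2 c s re (z ⟪u j, A (u k)⟫))`, where `p`, `q` are the
real numbers `⟪u j, A (u j)⟫`, `⟪u k, A (u k)⟫`. This quadratic form is
nonnegative on the unit circle only if its cross term vanishes, and as `ρ j ≠ ρ k` this gives
`⟪u j, A (u k)⟫ = 0`. Hence `A (u j)` is orthogonal to every `u k` with `k ≠ j`, so it is the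
multiple `⟪u j, A (u j)⟫ • u j`, and that coefficient is real and nonnegative.
-/

open scoped InnerProductSpace ComplexConjugate
open LinearMap (adjoint)

lemma eq_zero_of_forall_sq_add_sq_eq_one {B C : ℝ}
    (h : ∀ c s : ℝ, c ^ 2 + s ^ 2 = 1 → 0 ≤ s ^ 2 * C + 2 * c * s * B) : B = 0 := by
  have hline : ∀ t : ℝ, 0 ≤ C * (t * t) + 2 * B * t + 0 := by
    intro t
    have hd : 0 < √(1 + t ^ 2) := by positivity
    have hd2 : √(1 + t ^ 2) ^ 2 = 1 + t ^ 2 := Real.sq_sqrt (by positivity)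
    have := h (1 / √(1 + t ^ 2)) (t / √(1 + t ^ 2)) (by field_simp; linarith)
    field_simp at this
    linarith
  have := discrim_le_zero hline
  rw [discrim] at this
  nlinarith [sq_nonneg B]

section PlaneRotation

variable {ι E : Type*} [DecidableEq ι] [NormedAddCommGroup E] [InnerProductSpace ℂ E]

def planeRotation (u : ι → E) (j k : ι) (a b : ℂ) : ι → E :=
  Function.update (Function.update u j (a • u j + b • u k)) k (-conj b • u j + conj a • u k)

variable {u : ι → E} {j k : ι} {a b : ℂ}

lemma planeRotation_apply_left (hjk : j ≠ k) :
    planeRotation u j k a b j = a • u j + b • u k := by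
  simp [planeRotation, hjk]

lemma planeRotation_apply_right : planeRotation u j k a b k = -conj b • u j + conj a • u k := by
  simp [planeRotation]

lemma planeRotation_apply_of_ne {l : ι} (hj : l ≠ j) (hk : l ≠ k) :
    planeRotation u j k a b l = u l := by
  simp [planeRotation, hj, hk]

lemma Orthonormal.planeRotation (hu : Orthonormal ℂ u) (hjk : j ≠ k)
    (hab : Complex.normSq a + Complex.normSq b = 1) :
    Orthonormal ℂ (planeRotation u j k a b) := by
  have hab' : conj a * a + conj b * b = 1 := by
    simp only [← Complex.normSq_eq_conj_mul_self]; exact_mod_cast hab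
  have hcases : ∀ l, l = j ∨ l = k ∨ (l ≠ j ∧ l ≠ k ∧ j ≠ l ∧ k ≠ l) := by tauto
  rw [orthonormal_iff_ite] at hu ⊢
  intro l m
  rcases hcases l with rfl | rfl | ⟨hlj, hlk, hjl, hkl⟩ <;>
    rcases hcases m with rfl | rfl | ⟨hmj, hmk, hjm, hkm⟩ <;> clear hcases <;>
    simp only [planeRotation_apply_left, planeRotation_apply_right, planeRotation_apply_of_ne,
      inner_add_left, inner_add_right, inner_smul_left, inner_smul_right, hjk.symm, map_neg,
      Complex.conj_conj, ne_eq, *, if_true, if_false, not_false_eq_true] <;>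
    first | linear_combination hab' | ring1

end PlaneRotation

section WeightedEnergy

variable {ι E : Type*} [Fintype ι] [NormedAddCommGroup E] [InnerProductSpace ℂ E]

noncomputable def weightedEnergy (ρ : ι → ℝ) (A : E →ₗ[ℂ] E) (v : ι → E) : ℝ :=
  ∑ l, ρ l * (⟪v l, A (v l)⟫_ℂ).re

variable {ρ : ι → ℝ} {A : E →ₗ[ℂ] E}

lemma weightedEnergy_planeRotation [DecidableEq ι] (hA : A.IsSymmetric)
    {u : ι → E} {j k : ι} (hjk : j ≠ k) {a b : ℂ}
    (hab : Complex.normSq a + Complex.normSq b = 1) :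
    weightedEnergy ρ A (planeRotation u j k a b) = weightedEnergy ρ A u + (ρ j - ρ k) *
      (Complex.normSq b * ((⟪u k, A (u k)⟫_ℂ).re - (⟪u j, A (u j)⟫_ℂ).re) +
        2 * (conj a * b * ⟪u j, A (u k)⟫_ℂ).re) := by
  have hab' : conj a * a + conj b * b = 1 := by
    simp only [← Complex.normSq_eq_conj_mul_self]; exact_mod_cast hab
  have hconj : ∀ x y, conj ⟪x, A y⟫_ℂ = ⟪y, A x⟫_ℂ := fun x y => by
    rw [inner_conj_symm, hA]
  rw [← sub_eq_iff_eq_add', weightedEnergy, weightedEnergy, ← Finset.sum_sub_distrib,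
    Fintype.sum_eq_add j k hjk fun l hl => by rw [planeRotation_apply_of_ne hl.1 hl.2, sub_self],
    planeRotation_apply_left hjk, planeRotation_apply_right]
  -- with `re z = (z + conj z) / 2` the identity becomes polynomial in the inner products
  apply Complex.ofReal_injective
  simp only [map_add, map_smul, inner_add_left, inner_add_right, inner_smul_left, inner_smul_right,
    Complex.ofReal_mul, Complex.ofReal_sub, Complex.ofReal_add, Complex.re_eq_add_conj]
  simp only [map_add, map_mul, map_neg, Complex.conj_conj, hconj, Complex.normSq_eq_conj_mul_self,
    Complex.ofReal_ofNat]
  linear_combination ((ρ j : ℂ) * ⟪u j, A (u j)⟫_ℂ + ρ k * ⟪u k, A (u k)⟫_ℂ) * hab'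

theorem Orthonormal.inner_apply_eq_zero_of_isMinOn (hA : A.IsSymmetric) (hρ : Function.Injective ρ) {u : ι → E} (hu : Orthonormal ℂ u)
    (hmin : IsMinOn (weightedEnergy ρ A) {v | Orthonormal ℂ v} u) {j k : ι} (hjk : j ≠ k) :
    ⟪u j, A (u k)⟫_ℂ = 0 := by
  classical
  have hre : ∀ z : ℂ, Complex.normSq z = 1 → (z * ⟪u j, A (u k)⟫_ℂ).re = 0 := by
    intro z hz
    refine (mul_eq_zero.mp (eq_zero_of_forall_sq_add_sq_eq_one
      (C := (ρ j - ρ k) * ((⟪u k, A (u k)⟫_ℂ).re - (⟪u j, A (u j)⟫_ℂ).re))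
      fun c s hcs => ?_)).resolve_left (sub_ne_zero.mpr (hρ.ne hjk))
    have hab : Complex.normSq c + Complex.normSq (s * z) = 1 := by
      rw [Complex.normSq_ofReal, Complex.normSq_mul, Complex.normSq_ofReal, hz]; linarith
    have hcross : (conj (c : ℂ) * (s * z) * ⟪u j, A (u k)⟫_ℂ).re
        = c * s * (z * ⟪u j, A (u k)⟫_ℂ).re := by
      rw [Complex.conj_ofReal, ← Complex.re_ofReal_mul]; push_cast; ring_nf
    have := isMinOn_iff.mp hmin _ (hu.planeRotation hjk hab)
    rw [weightedEnergy_planeRotation hA hjk hab, Complex.normSq_mul, Complex.normSq_ofReal, hz,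
      hcross] at this
    nlinarith
  apply Complex.ext
  · simpa using hre 1 (by simp)
  · simpa using hre Complex.I (by simp)

theorem OrthonormalBasis.apply_eq_inner_smul_of_isMinOn (hA : A.IsSymmetric) (hρ : Function.Injective ρ) (u : OrthonormalBasis ι ℂ E)
    (hmin : IsMinOn (weightedEnergy ρ A) {v | Orthonormal ℂ v} u) (j : ι) :
    A (u j) = ⟪u j, A (u j)⟫_ℂ • u j := by
  conv_lhs => rw [← u.sum_repr' (A (u j))]
  refine Finset.sum_eq_single j (fun l _ hlj => ?_) (by simp)
  rw [u.orthonormal.inner_apply_eq_zero_of_isMinOn hA hρ hmin hlj, zero_smul]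

end WeightedEnergy

section Unitary

variable {ι H : Type*} [Fintype ι] [NormedAddCommGroup H] [InnerProductSpace ℂ H]
  [FiniteDimensional ℂ H]

noncomputable def OrthonormalBasis.ofOrthonormal (e : OrthonormalBasis ι ℂ H) {v : ι → H}
    (hv : Orthonormal ℂ v) : OrthonormalBasis ι ℂ H :=
  .mk hv (hv.linearIndependent.span_eq_top_of_card_eq_finrank'
    (Module.finrank_eq_card_basis e.toBasis).symm).ge

@[simp]
lemma OrthonormalBasis.coe_ofOrthonormal (e : OrthonormalBasis ι ℂ H) {v : ι → H}
    (hv : Orthonormal ℂ v) : ⇑(e.ofOrthonormal hv) = v :=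
  OrthonormalBasis.coe_mk _ _

lemma LinearIsometryEquiv.toLinearMap_mem_unitary (g : H ≃ₗᵢ[ℂ] H) :
    g.toLinearMap ∈ unitary (H →ₗ[ℂ] H) := by
  refine ⟨?_, ?_⟩ <;> ext x <;>
    simp [LinearMap.star_eq_adjoint, g.adjoint_toLinearMap_eq_symm, Module.End.mul_apply]

lemma exists_mem_unitary_apply_eq (e : OrthonormalBasis ι ℂ H) {v : ι → H}
    (hv : Orthonormal ℂ v) : ∃ V ∈ unitary (H →ₗ[ℂ] H), ∀ i, V (e i) = v i :=
  ⟨_, (e.equiv (e.ofOrthonormal hv) (.refl ι)).toLinearMap_mem_unitary, fun i => by simp⟩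

lemma inner_map_map_of_mem_unitary {U : H →ₗ[ℂ] H} (hU : U ∈ unitary (H →ₗ[ℂ] H)) (x y : H) :
    ⟪U x, U y⟫_ℂ = ⟪x, y⟫_ℂ := by
  rw [← LinearMap.adjoint_inner_right, ← Module.End.mul_apply, ← LinearMap.star_eq_adjoint,
    Unitary.star_mul_self_of_mem hU, Module.End.one_apply]

lemma re_trace_comp_adjoint_comp_comp (e : OrthonormalBasis ι ℂ H) {ρ : ι → ℝ} {D : H →ₗ[ℂ] H}
    (hD : ∀ i, D (e i) = (ρ i : ℂ) • e i) (A U : H →ₗ[ℂ] H) :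
    (LinearMap.trace ℂ H (D ∘ₗ adjoint U ∘ₗ A ∘ₗ U)).re = weightedEnergy ρ A (fun i => U (e i)) := by
  rw [LinearMap.trace_comp_comm', LinearMap.trace_eq_sum_inner _ e, Complex.re_sum, weightedEnergy]
  refine Finset.sum_congr rfl fun i _ => ?_
  simp only [LinearMap.comp_apply, hD, map_smul, inner_smul_right, Complex.re_ofReal_mul,
    LinearMap.adjoint_inner_right]

end Unitary

theorem stmt_2_general {H : Type*} [NormedAddCommGroup H] [InnerProductSpace ℂ H]
    [FiniteDimensional ℂ H] {n : ℕ}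
    (e : OrthonormalBasis (Fin n) ℂ H) (ρ : Fin n → ℝ)
    (hanti : StrictAnti ρ)
    (D A : H →ₗ[ℂ] H)
    (hD : ∀ j, D (e j) = (ρ j : ℂ) • e j)
    (hA : LinearMap.adjoint A = A)
    (hApos : ∀ x : H, 0 ≤ (inner ℂ (A x) x : ℂ).re)
    (U₀ : H →ₗ[ℂ] H)
    (hU₀ : LinearMap.adjoint U₀ ∘ₗ U₀ = LinearMap.id ∧
      U₀ ∘ₗ LinearMap.adjoint U₀ = LinearMap.id)
    (hmin : ∀ U : H →ₗ[ℂ] H,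
      (LinearMap.adjoint U ∘ₗ U = LinearMap.id ∧ U ∘ₗ LinearMap.adjoint U = LinearMap.id) →
      (LinearMap.trace ℂ H (D ∘ₗ LinearMap.adjoint U₀ ∘ₗ A ∘ₗ U₀)).re ≤
        (LinearMap.trace ℂ H (D ∘ₗ LinearMap.adjoint U ∘ₗ A ∘ₗ U)).re) :
    ∀ j, ∃ lam : ℝ, 0 ≤ lam ∧ A (U₀ (e j)) = (lam : ℂ) • U₀ (e j) := by
  intro j
  -- `hU₀` and the unitarity premise of `hmin` are, by definition, membership in
  -- `unitary (H →ₗ[ℂ] H)`, whose star is the adjoint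
  have hAsymm : A.IsSymmetric := (LinearMap.isSymmetric_iff_isSelfAdjoint A).mpr hA
  have hu : Orthonormal ℂ fun i => U₀ (e i) := by
    simpa only [orthonormal_iff_ite, inner_map_map_of_mem_unitary hU₀] using e.orthonormal
  have hminOn : IsMinOn (weightedEnergy ρ A) {v | Orthonormal ℂ v} (e.ofOrthonormal hu) := by
    refine isMinOn_iff.mpr fun v hv => ?_
    obtain ⟨V, hV, hVe⟩ := exists_mem_unitary_apply_eq e hv
    simpa [re_trace_comp_adjoint_comp_comp e hD, hVe] using hmin V hV
  have heig := (e.ofOrthonormal hu).apply_eq_inner_smul_of_isMinOn hAsymm hanti.injective hminOn j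
  rw [OrthonormalBasis.coe_ofOrthonormal, ← hAsymm.coe_re_inner_self_apply] at heig
  exact ⟨_, hAsymm _ _ ▸ hApos (U₀ (e j)), heig⟩

theorem stmt_2 {H : Type*} [NormedAddCommGroup H] [InnerProductSpace ℂ H]
    [FiniteDimensional ℂ H] {n : ℕ}
    (e : OrthonormalBasis (Fin n) ℂ H) (ρ : Fin n → ℝ)
    (hpos : ∀ j, 0 < ρ j) (hanti : StrictAnti ρ)
    (D A : H →ₗ[ℂ] H)
    (hD : ∀ j, D (e j) = (ρ j : ℂ) • e j)
    (hA : LinearMap.adjoint A = A)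
    (hApos : ∀ x : H, 0 ≤ (inner ℂ (A x) x : ℂ).re)
    (U₀ : H →ₗ[ℂ] H)
    (hU₀ : LinearMap.adjoint U₀ ∘ₗ U₀ = LinearMap.id ∧
      U₀ ∘ₗ LinearMap.adjoint U₀ = LinearMap.id)
    (hmin : ∀ U : H →ₗ[ℂ] H,
      (LinearMap.adjoint U ∘ₗ U = LinearMap.id ∧ U ∘ₗ LinearMap.adjoint U = LinearMap.id) →
      (LinearMap.trace ℂ H (D ∘ₗ LinearMap.adjoint U₀ ∘ₗ A ∘ₗ U₀)).re ≤
        (LinearMap.trace ℂ H (D ∘ₗ LinearMap.adjoint U ∘ₗ A ∘ₗ U)).re) :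
    ∀ j, ∃ lam : ℝ, 0 ≤ lam ∧ A (U₀ (e j)) = (lam : ℂ) • U₀ (e j) :=
  stmt_2_general e ρ hanti D A hD hA hApos U₀ hU₀ hmin
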